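/- Assume f satisfies (f1) and (f2), let 0 < a < b < ∞, and let u₁ and u₂ be two positive solutions of (R) with 0 < u₁'(a) < u₂'(a). Then r₁(β)^{n−1}·u₁'(r₁(β)) < r₂(β)^{n−1}·u₂'(r₂(β)) (this quantity equals rᵢ(β)^{n−1}/rᵢ'(β)); moreover, if β > 0 then r₁(s) > r₂(s) for all s ∈ (0, β]. -/

import Mathlib

open Set Filter MeasureTheory

/-- `F(s) = ∫₀ˢ f(t) dt`. -/
noncomputable def Fint (f : ℝ → ℝ) (s : ℝ) : ℝ := ∫ t in (0:ℝ)..s, f t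

/-- Condition (f1): `f` is continuous on `[0,∞)`, continuously differentiable on `(0,∞)`,
and `f' ∈ L¹(0,1)`. -/
def CondF1 (f : ℝ → ℝ) : Prop :=
  ContinuousOn f (Ici 0) ∧ (∀ s ∈ Ioi (0:ℝ), DifferentiableAt ℝ f s) ∧
  ContinuousOn (deriv f) (Ioi 0) ∧ IntervalIntegrable (deriv f) volume 0 1

/-- Condition (f2) in the case `β > B > 0`. -/
def CondF2B (f : ℝ → ℝ) (β B : ℝ) : Prop :=
  f 0 = 0 ∧ 0 < B ∧ B < β ∧ (∀ s, B < s → 0 < f s) ∧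
  (∀ s ∈ Icc (0:ℝ) B, f s ≤ 0) ∧ (∃ ε > (0:ℝ), ∀ s ∈ Ioo (0:ℝ) ε, f s < 0) ∧
  Fint f β = 0

/-- Condition (f2): either `β = B = 0` and `f > 0` on `(0,∞)`, or `β > B > 0` with the
sign conditions and `F(β) = 0`. -/
def CondF2 (f : ℝ → ℝ) (β B : ℝ) : Prop :=
  (β = 0 ∧ B = 0 ∧ f 0 = 0 ∧ ∀ s, 0 < s → 0 < f s) ∨ CondF2B f β B

/-- Condition (f3): the derivative of `s ↦ F(s)/f(s)` is `≥ (n-2)/(2n)` for every `s > β`. -/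
def CondF3 (n : ℕ) (f : ℝ → ℝ) (β : ℝ) : Prop :=
  ∀ s, β < s → ∃ d, ((n : ℝ) - 2) / (2 * (n : ℝ)) ≤ d ∧
    HasDerivAt (fun t => Fint f t / f t) d s

/-- Condition (f4): superlinearity `f(s) ≤ f'(s)(s - B)` for `s > B`, with
`f(s) ≢ f'(s)(s - B)` on `[B, β]`. -/
def CondF4 (f : ℝ → ℝ) (β B : ℝ) : Prop :=
  (∀ s, B < s → f s ≤ deriv f s * (s - B)) ∧
  ¬ (∀ s ∈ Icc B β, f s = deriv f s * (s - B))

/-- A positive solution of problem (R) on the annulus `a < |x| < b`: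
`u` is continuous on `[a,b]`, differentiable up to the boundary with derivative `u'`
(one-sided at the endpoints), `u'` is continuous on `[a,b]`, `u` is twice continuously
differentiable on `(a,b)` where it satisfies `u'' + ((n-1)/r) u' + f(u) = 0`,
`u(a) = u(b) = 0` and `u > 0` on `(a,b)`. -/
def IsPosSolAnn (n : ℕ) (a b : ℝ) (f u u' : ℝ → ℝ) : Prop :=
  ContinuousOn u (Icc a b) ∧
  (∀ r ∈ Icc a b, HasDerivWithinAt u (u' r) (Icc a b) r) ∧
  ContinuousOn u' (Icc a b) ∧
  (∀ r ∈ Ioo a b, HasDerivAt u (u' r) r) ∧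
  (∀ r ∈ Ioo a b, HasDerivAt u' (-(((n : ℝ) - 1) / r * u' r + f (u r))) r) ∧
  u a = 0 ∧ u b = 0 ∧ (∀ r ∈ Ioo a b, 0 < u r)

/-- A positive solution of the exterior problem (R) with `b = ∞`:
`u` is continuous on `[a,∞)`, differentiable on `[a,∞)` with derivative `u'`
(one-sided at `a`), twice continuously differentiable on `(a,∞)` where it satisfies
`u'' + ((n-1)/r) u' + f(u) = 0`, `u(a) = 0`, `u > 0` on `(a,∞)` and `u(r) → 0` as `r → ∞`. -/
def IsPosSolExt (n : ℕ) (a : ℝ) (f u u' : ℝ → ℝ) : Prop :=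
  ContinuousOn u (Ici a) ∧
  (∀ r ∈ Ici a, HasDerivWithinAt u (u' r) (Ici a) r) ∧
  (∀ r ∈ Ioi a, HasDerivAt u (u' r) r) ∧
  (∀ r ∈ Ioi a, HasDerivAt u' (-(((n : ℝ) - 1) / r * u' r + f (u r))) r) ∧
  u a = 0 ∧ (∀ r ∈ Ioi a, 0 < u r) ∧
  Tendsto u atTop (nhds 0)

/-- The Erbe–Tang functional
`P(s) = -2n (F(s)/f(s)) ρ(s)^{n-1} u'(ρ(s)) - ρ(s)^n (u'(ρ(s)))² - 2 ρ(s)^n F(s)`,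
where `ρ` is an inverse branch of the solution `u` with derivative `u'`. -/
noncomputable def Pfun (n : ℕ) (f : ℝ → ℝ) (ρ u' : ℝ → ℝ) (s : ℝ) : ℝ :=
  -2 * (n : ℝ) * (Fint f s / f s) * (ρ s) ^ (n - 1) * u' (ρ s)
    - (ρ s) ^ n * (u' (ρ s)) ^ 2 - 2 * (ρ s) ^ n * Fint f s

/-! The proof compares the two solutions level by level: in the variable `s = u(r)` the increasing
branch of a solution becomes a pair `(r(s), p(s))`, with `p(s) = u'(r(s))`, solving
`r' = 1/p`, `p' = -((n-1) p / r + f(s)) / p`. Along such a branch the weighted energy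
`H = r^{2(n-1)} (p²/2 + F(s))` has derivative `2(n-1) F(s) r^{2n-3} / p`. On `[0, β]`, where `F ≤ 0`,
as long as `p₁ < p₂` the radii satisfy `r₂ < r₁` and hence `H₂ - H₁` increases; so it stays above its
positive initial value. At a first level where `p₁ = p₂` the radii order together with
`p₂²/2 + F > 0` (energy decreases along the solution up to its maximum, where it is at
least `F(M₂) > 0`) would force `H₂ < H₁`. Hence `p₁ < p₂` on all of `[0, β]`, and `H₁(β) < H₂(β)` with
`F(β) = 0` is the claimed inequality. -/

lemma continuousOn_Icc_of_monotoneOn_of_surjOn {g : ℝ → ℝ} {s t a c : ℝ}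
    (hmono : MonotoneOn g (Icc s t)) (hmaps : MapsTo g (Icc s t) (Icc a c))
    (hsurj : SurjOn g (Icc s t) (Icc a c)) : ContinuousOn g (Icc s t) := by
  rw [continuousOn_iff_continuous_domRestrict]
  have : Continuous hmaps.restrict :=
    Monotone.continuous_of_surjective (fun x y hxy => hmono x.2 y.2 hxy)
      (hmaps.restrict_surjective_iff.2 hsurj)
  exact continuous_subtype_val.comp this

lemma forall_pos_of_forall_pos_Ioo {g : ℝ → ℝ} {a b : ℝ} (hg : ContinuousOn g (Icc a b))
    (ha : 0 < g a) (hstep : ∀ σ ∈ Ioc a b, (∀ s ∈ Ioo a σ, 0 < g s) → 0 < g σ) :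
    ∀ s ∈ Icc a b, 0 < g s := by
  by_contra! hneg
  obtain ⟨s, hs, hgs⟩ := hneg
  set S := {x ∈ Icc a b | g x ≤ 0}
  have hclosed : IsClosed S := hg.preimage_isClosed_of_isClosed isClosed_Icc isClosed_Iic
  have hbdd : BddBelow S := ⟨a, fun x hx => hx.1.1⟩
  obtain ⟨⟨hs₀a, hs₀b⟩, hgs₀⟩ : sInf S ∈ S := hclosed.csInf_mem ⟨s, hs, hgs⟩ hbdd
  have hlt : a < sInf S := lt_of_le_of_ne hs₀a fun h => by rw [← h] at hgs₀; linarith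
  refine (hstep (sInf S) ⟨hlt, hs₀b⟩ fun x hx => ?_).not_ge hgs₀
  by_contra! hgx
  exact (csInf_le hbdd ⟨⟨hx.1.le, hx.2.le.trans hs₀b⟩, hgx⟩).not_gt hx.2

section Primitive

variable {f : ℝ → ℝ}

lemma intervalIntegrable_of_continuousOn_Ici (hf : ContinuousOn f (Ici 0)) {x y : ℝ}
    (hx : 0 ≤ x) (hy : 0 ≤ y) : IntervalIntegrable f volume x y :=
  (hf.mono fun _ ht => le_trans (le_min hx hy) ht.1).intervalIntegrable

lemma hasDerivAt_Fint (hf : ContinuousOn f (Ici 0)) {s : ℝ} (hs : 0 < s) :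
    HasDerivAt (Fint f) (f s) s :=
  intervalIntegral.integral_hasDerivAt_right
    (intervalIntegrable_of_continuousOn_Ici hf le_rfl hs.le)
    ((hf.mono Ioi_subset_Ici_self).stronglyMeasurableAtFilter isOpen_Ioi s hs)
    (hf.continuousAt (Ici_mem_nhds hs))

lemma continuousOn_Fint (hf : ContinuousOn f (Ici 0)) {T : ℝ} (hT : 0 ≤ T) :
    ContinuousOn (Fint f) (Icc 0 T) := by
  have h := intervalIntegral.continuousOn_primitive_interval'
    (intervalIntegrable_of_continuousOn_Ici hf le_rfl hT) left_mem_uIcc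
  rwa [uIcc_of_le hT] at h

lemma Fint_zero : Fint f 0 = 0 := intervalIntegral.integral_same

variable {β B : ℝ}

lemma Fint_nonpos (hf : ContinuousOn f (Ici 0)) (h : CondF2B f β B) :
    ∀ s ∈ Icc 0 β, Fint f s ≤ 0 := by
  obtain ⟨-, -, -, hfpos, hfnonpos, -, hFβ⟩ := h
  intro s hs
  rcases le_or_gt s B with hsB | hBs
  · have h := intervalIntegral.integral_nonneg (μ := volume) (f := fun t => -f t) hs.1
      fun t ht => neg_nonneg.2 (hfnonpos t ⟨ht.1, ht.2.trans hsB⟩)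
    rw [intervalIntegral.integral_neg] at h
    exact neg_nonneg.1 h
  · have htail : 0 ≤ ∫ t in s..β, f t :=
      intervalIntegral.integral_nonneg hs.2 fun t ht => (hfpos t (hBs.trans_le ht.1)).le
    have hsplit : Fint f β - Fint f s = ∫ t in s..β, f t :=
      intervalIntegral.integral_interval_sub_left
        (intervalIntegrable_of_continuousOn_Ici hf le_rfl (hs.1.trans hs.2))
        (intervalIntegrable_of_continuousOn_Ici hf le_rfl hs.1)
    linarith

lemma Fint_pos (hf : ContinuousOn f (Ici 0)) (h : CondF2B f β B) {M : ℝ} (hM : β < M) :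
    0 < Fint f M := by
  obtain ⟨-, hB, hBβ, hfpos, -, -, hFβ⟩ := h
  have hβ : 0 ≤ β := hB.le.trans hBβ.le
  have hsplit : Fint f M - Fint f β = ∫ t in β..M, f t :=
    intervalIntegral.integral_interval_sub_left
      (intervalIntegrable_of_continuousOn_Ici hf le_rfl (hβ.trans hM.le))
      (intervalIntegrable_of_continuousOn_Ici hf le_rfl hβ)
  have htail : 0 < ∫ t in β..M, f t :=
    intervalIntegral.intervalIntegral_pos_of_pos_on
      (intervalIntegrable_of_continuousOn_Ici hf hβ (hβ.trans hM.le))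
      (fun t ht => hfpos t (hBβ.trans ht.1)) hM
  linarith

end Primitive

structure IsLevelBranch (n : ℕ) (f : ℝ → ℝ) (β : ℝ) (r p : ℝ → ℝ) : Prop where
  continuousOn_r : ContinuousOn r (Icc 0 β)
  continuousOn_p : ContinuousOn p (Icc 0 β)
  r_pos : ∀ s ∈ Icc 0 β, 0 < r s
  p_pos : ∀ s ∈ Icc 0 β, 0 < p s
  hasDerivAt_r : ∀ s ∈ Ioo 0 β, HasDerivAt r (p s)⁻¹ s
  hasDerivAt_p : ∀ s ∈ Ioo 0 β, HasDerivAt p (-(((n : ℝ) - 1) / r s * p s + f s) / p s) s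

noncomputable def weightedEnergy (n : ℕ) (f r p : ℝ → ℝ) (s : ℝ) : ℝ :=
  (r s ^ (n - 1)) ^ 2 * (p s ^ 2 / 2 + Fint f s)

lemma weightedEnergy_lt_of_radius_lt {n : ℕ} {f r₁ p₁ r₂ p₂ : ℝ → ℝ} {s : ℝ} (hn : 2 ≤ n)
    (hr₂ : 0 < r₂ s) (hr : r₂ s < r₁ s) (hp : p₂ s ≤ p₁ s) (hp₂ : 0 < p₂ s)
    (hE : 0 < p₂ s ^ 2 / 2 + Fint f s) :
    weightedEnergy n f r₂ p₂ s < weightedEnergy n f r₁ p₁ s := by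
  have hq : (r₂ s ^ (n - 1)) ^ 2 < (r₁ s ^ (n - 1)) ^ 2 := by
    gcongr
    omega
  calc weightedEnergy n f r₂ p₂ s < (r₁ s ^ (n - 1)) ^ 2 * (p₂ s ^ 2 / 2 + Fint f s) :=
        mul_lt_mul_of_pos_right hq hE
    _ ≤ weightedEnergy n f r₁ p₁ s := by
        unfold weightedEnergy
        gcongr

namespace IsLevelBranch

variable {n : ℕ} {f r p r₁ p₁ r₂ p₂ : ℝ → ℝ} {β : ℝ}

lemma mono (h : IsLevelBranch n f β r p) {σ : ℝ} (hσ : σ ≤ β) : IsLevelBranch n f σ r p where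
  continuousOn_r := h.continuousOn_r.mono (Icc_subset_Icc_right hσ)
  continuousOn_p := h.continuousOn_p.mono (Icc_subset_Icc_right hσ)
  r_pos s hs := h.r_pos s ⟨hs.1, hs.2.trans hσ⟩
  p_pos s hs := h.p_pos s ⟨hs.1, hs.2.trans hσ⟩
  hasDerivAt_r s hs := h.hasDerivAt_r s ⟨hs.1, hs.2.trans_le hσ⟩
  hasDerivAt_p s hs := h.hasDerivAt_p s ⟨hs.1, hs.2.trans_le hσ⟩

lemma hasDerivAt_weightedEnergy (hn : 2 ≤ n) (hf : ContinuousOn f (Ici 0))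
    (h : IsLevelBranch n f β r p) {s : ℝ} (hs : s ∈ Ioo 0 β) :
    HasDerivAt (weightedEnergy n f r p)
      (2 * ((n : ℝ) - 1) * Fint f s * (r s ^ (n - 1) * r s ^ (n - 2)) / p s) s := by
  have hr := (h.r_pos s (Ioo_subset_Icc_self hs)).ne'
  have hp := (h.p_pos s (Ioo_subset_Icc_self hs)).ne'
  have hq := ((h.hasDerivAt_r s hs).fun_pow (n - 1)).fun_pow 2
  have hE := (((h.hasDerivAt_p s hs).fun_pow 2).div_const 2).fun_add (hasDerivAt_Fint hf hs.1)
  refine (hq.fun_mul hE).congr_deriv ?_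
  obtain ⟨m, rfl⟩ : ∃ m, n = m + 2 := ⟨n - 2, by omega⟩
  simp only [show m + 2 - 1 = m + 1 by omega, Nat.add_sub_cancel]
  push_cast
  field_simp
  ring

lemma continuousOn_weightedEnergy (hf : ContinuousOn f (Ici 0)) (h : IsLevelBranch n f β r p)
    (hβ : 0 ≤ β) : ContinuousOn (weightedEnergy n f r p) (Icc 0 β) :=
  ((h.continuousOn_r.pow _).pow 2).mul
    (((h.continuousOn_p.pow 2).div_const 2).add (continuousOn_Fint hf hβ))

lemma weightedEnergy_zero_lt (h₁ : IsLevelBranch n f β r₁ p₁) (h₂ : IsLevelBranch n f β r₂ p₂)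
    (hβ : 0 ≤ β) (hr0 : r₁ 0 = r₂ 0) (hp0 : p₁ 0 < p₂ 0) :
    weightedEnergy n f r₁ p₁ 0 < weightedEnergy n f r₂ p₂ 0 := by
  have hr := h₂.r_pos 0 ⟨le_rfl, hβ⟩
  have hp := h₁.p_pos 0 ⟨le_rfl, hβ⟩
  unfold weightedEnergy
  rw [hr0, Fint_zero]
  gcongr

lemma radius_lt (h₁ : IsLevelBranch n f β r₁ p₁) (h₂ : IsLevelBranch n f β r₂ p₂)
    (hr0 : r₁ 0 = r₂ 0) (hp : ∀ s ∈ Ioo 0 β, p₁ s < p₂ s) : ∀ s ∈ Ioc 0 β, r₂ s < r₁ s := by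
  have hmono : StrictMonoOn (fun s => r₁ s - r₂ s) (Icc 0 β) := by
    refine strictMonoOn_of_hasDerivWithinAt_pos (f' := fun s => (p₁ s)⁻¹ - (p₂ s)⁻¹)
      (convex_Icc 0 β) (h₁.continuousOn_r.sub h₂.continuousOn_r) ?_ ?_ <;> rw [interior_Icc]
    · exact fun s hs => ((h₁.hasDerivAt_r s hs).sub (h₂.hasDerivAt_r s hs)).hasDerivWithinAt
    · exact fun s hs =>
        sub_pos.2 (inv_strictAnti₀ (h₁.p_pos s (Ioo_subset_Icc_self hs)) (hp s hs))
  intro s hs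
  simpa only [hr0, sub_self, sub_pos] using hmono ⟨le_rfl, hs.1.le.trans hs.2⟩ ⟨hs.1.le, hs.2⟩ hs.1

lemma monotoneOn_weightedEnergy_sub (hn : 2 ≤ n) (hf : ContinuousOn f (Ici 0))
    (h₁ : IsLevelBranch n f β r₁ p₁) (h₂ : IsLevelBranch n f β r₂ p₂) (hβ : 0 ≤ β)
    (hF : ∀ s ∈ Ioo 0 β, Fint f s ≤ 0) (hr : ∀ s ∈ Ioo 0 β, r₂ s ≤ r₁ s)
    (hp : ∀ s ∈ Ioo 0 β, p₁ s ≤ p₂ s) :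
    MonotoneOn (fun s => weightedEnergy n f r₂ p₂ s - weightedEnergy n f r₁ p₁ s) (Icc 0 β) := by
  refine monotoneOn_of_hasDerivWithinAt_nonneg (convex_Icc 0 β) (f' := fun s =>
      2 * ((n : ℝ) - 1) * Fint f s * (r₂ s ^ (n - 1) * r₂ s ^ (n - 2)) / p₂ s
        - 2 * ((n : ℝ) - 1) * Fint f s * (r₁ s ^ (n - 1) * r₁ s ^ (n - 2)) / p₁ s)
    ((h₂.continuousOn_weightedEnergy hf hβ).sub (h₁.continuousOn_weightedEnergy hf hβ)) ?_ ?_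
    <;> rw [interior_Icc]
  · exact fun s hs => ((h₂.hasDerivAt_weightedEnergy hn hf hs).sub
      (h₁.hasDerivAt_weightedEnergy hn hf hs)).hasDerivWithinAt
  · intro s hs
    have hr₂ := h₂.r_pos s (Ioo_subset_Icc_self hs)
    have hp₁ := h₁.p_pos s (Ioo_subset_Icc_self hs)
    have hn1 : (0 : ℝ) ≤ n - 1 := sub_nonneg.2 (by exact_mod_cast (by omega : 1 ≤ n))
    have hX : r₂ s ^ (n - 1) * r₂ s ^ (n - 2) / p₂ s ≤ r₁ s ^ (n - 1) * r₁ s ^ (n - 2) / p₁ s := by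
      have hr₁ := hr₂.trans_le (hr s hs)
      gcongr
      exacts [hr s hs, hr s hs, hp s hs]
    have key : 0 ≤ 2 * ((n : ℝ) - 1) * (Fint f s *
        (r₂ s ^ (n - 1) * r₂ s ^ (n - 2) / p₂ s - r₁ s ^ (n - 1) * r₁ s ^ (n - 2) / p₁ s)) :=
      mul_nonneg (by positivity) (mul_nonneg_of_nonpos_of_nonpos (hF s hs) (sub_nonpos.2 hX))
    convert key using 1
    ring

lemma weightedEnergy_lt (hn : 2 ≤ n) (hf : ContinuousOn f (Ici 0))
    (h₁ : IsLevelBranch n f β r₁ p₁) (h₂ : IsLevelBranch n f β r₂ p₂) (hβ : 0 ≤ β)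
    (hr0 : r₁ 0 = r₂ 0) (hp0 : p₁ 0 < p₂ 0) (hF : ∀ s ∈ Ioo 0 β, Fint f s ≤ 0)
    (hp : ∀ s ∈ Ioo 0 β, p₁ s < p₂ s) :
    weightedEnergy n f r₁ p₁ β < weightedEnergy n f r₂ p₂ β := by
  have hr := h₁.radius_lt h₂ hr0 hp
  have hmono := h₁.monotoneOn_weightedEnergy_sub hn hf h₂ hβ hF
    (fun s hs => (hr s ⟨hs.1, hs.2.le⟩).le) (fun s hs => (hp s hs).le)
  have h0 := h₁.weightedEnergy_zero_lt h₂ hβ hr0 hp0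
  have hsub := hmono ⟨le_rfl, hβ⟩ ⟨hβ, le_rfl⟩ hβ
  simp only at hsub
  linarith

lemma slope_lt (hn : 2 ≤ n) (hf : ContinuousOn f (Ici 0))
    (h₁ : IsLevelBranch n f β r₁ p₁) (h₂ : IsLevelBranch n f β r₂ p₂)
    (hr0 : r₁ 0 = r₂ 0) (hp0 : p₁ 0 < p₂ 0) (hF : ∀ s ∈ Ioo 0 β, Fint f s ≤ 0)
    (hE : ∀ s ∈ Ioc 0 β, 0 < p₂ s ^ 2 / 2 + Fint f s) :
    ∀ s ∈ Icc 0 β, p₁ s < p₂ s := by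
  suffices ∀ s ∈ Icc 0 β, 0 < p₂ s - p₁ s from fun s hs => sub_pos.1 (this s hs)
  refine forall_pos_of_forall_pos_Ioo (h₂.continuousOn_p.sub h₁.continuousOn_p) (sub_pos.2 hp0)
    fun σ hσ hlt => ?_
  by_contra! hle
  have hp : ∀ s ∈ Ioo 0 σ, p₁ s < p₂ s := fun s hs => sub_pos.1 (hlt s hs)
  have hσβ : σ ∈ Icc 0 β := Ioc_subset_Icc_self hσ
  have h₁' := h₁.mono hσ.2
  have h₂' := h₂.mono hσ.2
  have hlow := h₁'.weightedEnergy_lt hn hf h₂' hσ.1.le hr0 hp0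
    (fun s hs => hF s ⟨hs.1, hs.2.trans_le hσ.2⟩) hp
  -- at the first level `σ` where `p₂ ≤ p₁`, the radii order reverses the energy order
  have hhigh := weightedEnergy_lt_of_radius_lt hn (h₂.r_pos σ hσβ)
    (h₁'.radius_lt h₂' hr0 hp σ ⟨hσ.1, le_rfl⟩) (sub_nonpos.1 hle) (h₂.p_pos σ hσβ) (hE σ hσ)
  exact hlow.not_gt hhigh

end IsLevelBranch

namespace IsPosSolAnn

variable {n : ℕ} {a b c : ℝ} {f u u' r : ℝ → ℝ}

lemma antitoneOn_energy (hn : 1 ≤ n) (ha : 0 ≤ a) (hf : ContinuousOn f (Ici 0))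
    (h : IsPosSolAnn n a b f u u') :
    AntitoneOn (fun x => u' x ^ 2 / 2 + Fint f (u x)) (Ioo a b) := by
  obtain ⟨-, -, -, hu, hu', -, -, hpos⟩ := h
  have hE : ∀ x ∈ Ioo a b, HasDerivAt (fun y => u' y ^ 2 / 2 + Fint f (u y))
      (-(((n : ℝ) - 1) / x * u' x ^ 2)) x := fun x hx =>
    ((((hu' x hx).pow 2).div_const 2).add
      ((hasDerivAt_Fint hf (hpos x hx)).comp x (hu x hx))).congr_deriv (by push_cast; ring)
  refine antitoneOn_of_hasDerivWithinAt_nonpos (f' := fun x => -(((n : ℝ) - 1) / x * u' x ^ 2))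
    (convex_Ioo a b) (fun x hx => (hE x hx).continuousAt.continuousWithinAt) ?_ ?_
    <;> rw [interior_Ioo]
  · exact fun x hx => (hE x hx).hasDerivWithinAt
  · intro x hx
    have hx0 : 0 < x := ha.trans_lt hx.1
    have hn1 : (0 : ℝ) ≤ n - 1 := sub_nonneg.2 (by exact_mod_cast hn)
    rw [neg_nonpos]
    positivity

lemma monotoneOn_Icc (h : IsPosSolAnn n a b f u u') (hc : c ∈ Ioo a b)
    (hup : ∀ x ∈ Ico a c, 0 < u' x) : MonotoneOn u (Icc a c) := by
  obtain ⟨hcont, -, -, hu, -⟩ := h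
  refine monotoneOn_of_hasDerivWithinAt_nonneg (f' := u') (convex_Icc a c)
    (hcont.mono (Icc_subset_Icc_right hc.2.le)) ?_ ?_ <;> rw [interior_Icc]
  · exact fun x hx => (hu x ⟨hx.1, hx.2.trans hc.2⟩).hasDerivWithinAt
  · exact fun x hx => (hup x ⟨hx.1.le, hx.2⟩).le

lemma inverse_zero (h : IsPosSolAnn n a b f u u') (hc : c ∈ Ioo a b)
    (hmem : ∀ s ∈ Icc 0 (u c), r s ∈ Icc a c ∧ u (r s) = s) : r 0 = a := by
  obtain ⟨-, -, -, -, -, -, -, hpos⟩ := h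
  obtain ⟨⟨har, hrc⟩, hur⟩ := hmem 0 ⟨le_rfl, (hpos c hc).le⟩
  by_contra hne
  exact (hpos _ ⟨lt_of_le_of_ne har (Ne.symm hne), hrc.trans_lt hc.2⟩).ne' hur

lemma lt_inverse (h : IsPosSolAnn n a b f u u')
    (hmem : ∀ s ∈ Icc 0 (u c), r s ∈ Icc a c ∧ u (r s) = s) {s : ℝ} (hs : s ∈ Ioc 0 (u c)) :
    a < r s := by
  obtain ⟨-, -, -, -, -, hua, -⟩ := h
  obtain ⟨⟨har, -⟩, hur⟩ := hmem s ⟨hs.1.le, hs.2⟩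
  refine lt_of_le_of_ne har fun hr => hs.1.ne ?_
  rw [← hur, ← hr, hua]

lemma inverse_lt (hmem : ∀ s ∈ Icc 0 (u c), r s ∈ Icc a c ∧ u (r s) = s) {s : ℝ}
    (hs : s ∈ Ico 0 (u c)) : r s < c := by
  obtain ⟨⟨-, hrc⟩, hur⟩ := hmem s ⟨hs.1, hs.2.le⟩
  refine lt_of_le_of_ne hrc fun hr => hs.2.ne ?_
  rw [← hur, hr]

lemma continuousOn_inverse (h : IsPosSolAnn n a b f u u') (hc : c ∈ Ioo a b)
    (hup : ∀ x ∈ Ico a c, 0 < u' x)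
    (hmem : ∀ s ∈ Icc 0 (u c), r s ∈ Icc a c ∧ u (r s) = s)
    (hinv : ∀ x ∈ Icc a c, r (u x) = x) : ContinuousOn r (Icc 0 (u c)) := by
  have hu := h.monotoneOn_Icc hc hup
  have hac : a ≤ c := hc.1.le
  refine continuousOn_Icc_of_monotoneOn_of_surjOn (fun s hs t ht hst => ?_)
    (fun s hs => (hmem s hs).1) (fun x hx => ⟨u x, ?_, hinv x hx⟩)
  · by_contra! hlt
    have hts := hu (hmem t ht).1 (hmem s hs).1 hlt.le
    rw [(hmem s hs).2, (hmem t ht).2] at hts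
    exact hlt.ne (by rw [le_antisymm hst hts])
  · obtain ⟨-, -, -, -, -, hua, -⟩ := h
    rw [← hua]
    exact ⟨hu ⟨le_rfl, hac⟩ hx hx.1, hu hx ⟨hac, le_rfl⟩ hx.2⟩

lemma hasDerivAt_inverse (h : IsPosSolAnn n a b f u u') (hc : c ∈ Ioo a b)
    (hup : ∀ x ∈ Ico a c, 0 < u' x)
    (hmem : ∀ s ∈ Icc 0 (u c), r s ∈ Icc a c ∧ u (r s) = s)
    (hinv : ∀ x ∈ Icc a c, r (u x) = x) {s : ℝ} (hs : s ∈ Ioo 0 (u c)) :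
    HasDerivAt r (u' (r s))⁻¹ s := by
  have har := h.lt_inverse hmem (Ioo_subset_Ioc_self hs)
  have hrc := inverse_lt hmem (Ioo_subset_Ico_self hs)
  have ⟨_, _, _, hu, _⟩ := h
  refine HasDerivAt.of_local_left_inverse
    ((h.continuousOn_inverse hc hup hmem hinv).continuousAt (Icc_mem_nhds hs.1 hs.2))
    (hu _ ⟨har, hrc.trans hc.2⟩) (hup _ ⟨har.le, hrc⟩).ne' ?_
  filter_upwards [Ioo_mem_nhds hs.1 hs.2] with y hy using (hmem y ⟨hy.1.le, hy.2.le⟩).2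

lemma isLevelBranch (ha : 0 < a) (h : IsPosSolAnn n a b f u u') (hc : c ∈ Ioo a b)
    (hup : ∀ x ∈ Ico a c, 0 < u' x)
    (hmem : ∀ s ∈ Icc 0 (u c), r s ∈ Icc a c ∧ u (r s) = s)
    (hinv : ∀ x ∈ Icc a c, r (u x) = x) {β : ℝ} (hβ : β < u c) :
    IsLevelBranch n f β r (fun s => u' (r s)) := by
  have ⟨_, _, hu'c, _, hu', _⟩ := h
  have hsub : Icc 0 β ⊆ Icc 0 (u c) := Icc_subset_Icc_right hβ.le
  have hr := (h.continuousOn_inverse hc hup hmem hinv).mono hsub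
  have hdr : ∀ s ∈ Ioo 0 β, HasDerivAt r (u' (r s))⁻¹ s :=
    fun s hs => h.hasDerivAt_inverse hc hup hmem hinv ⟨hs.1, hs.2.trans hβ⟩
  refine ⟨hr, hu'c.comp hr fun s hs => Icc_subset_Icc_right hc.2.le (hmem s (hsub hs)).1,
    fun s hs => ha.trans_le (hmem s (hsub hs)).1.1,
    fun s hs => hup _ ⟨(hmem s (hsub hs)).1.1, inverse_lt hmem ⟨hs.1, hs.2.trans_lt hβ⟩⟩,
    hdr, fun s hs => ?_⟩
  have hrs : r s ∈ Ioo a b :=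
    ⟨h.lt_inverse hmem ⟨hs.1, hs.2.le.trans hβ.le⟩,
      (inverse_lt hmem ⟨hs.1.le, hs.2.trans hβ⟩).trans hc.2⟩
  have hp := (hu' (r s) hrs).comp s (hdr s hs)
  rwa [(hmem s (hsub (Ioo_subset_Icc_self hs))).2, ← div_eq_mul_inv] at hp

lemma Fint_le_energy (hn : 1 ≤ n) (ha : 0 ≤ a) (hf : ContinuousOn f (Ici 0))
    (h : IsPosSolAnn n a b f u u') (hc : c ∈ Ioo a b)
    (hmem : ∀ s ∈ Icc 0 (u c), r s ∈ Icc a c ∧ u (r s) = s) {s : ℝ} (hs : s ∈ Ioc 0 (u c)) :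
    Fint f (u c) ≤ u' (r s) ^ 2 / 2 + Fint f s := by
  obtain ⟨⟨-, hrc⟩, hur⟩ := hmem s (Ioc_subset_Icc_self hs)
  have henergy := h.antitoneOn_energy hn ha hf ⟨h.lt_inverse hmem hs, hrc.trans_lt hc.2⟩ hc hrc
  simp only [hur] at henergy
  linarith [sq_nonneg (u' c)]

end IsPosSolAnn

theorem step_one_general
    (n : ℕ) (hn : 2 ≤ n) (f : ℝ → ℝ) (β B : ℝ)
    (hf1 : CondF1 f) (hf2 : CondF2 f β B)
    (a b : ℝ) (ha : 0 < a)
    (u₁ u₁' u₂ u₂' : ℝ → ℝ)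
    (h₁ : IsPosSolAnn n a b f u₁ u₁') (h₂ : IsPosSolAnn n a b f u₂ u₂')
    (hslope₁₂ : u₁' a < u₂' a)
    (c₁ c₂ : ℝ) (hc₁ : c₁ ∈ Ioo a b) (hc₂ : c₂ ∈ Ioo a b)
    (hc₁up : ∀ r ∈ Ico a c₁, 0 < u₁' r)
    (hc₂up : ∀ r ∈ Ico a c₂, 0 < u₂' r)
    (M₁ M₂ : ℝ) (hM₁ : M₁ = u₁ c₁) (hM₂ : M₂ = u₂ c₂)
    (hβM₁ : β < M₁) (hβM₂ : β < M₂)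
    (r₁ r₂ : ℝ → ℝ)
    (hr₁mem : ∀ s ∈ Icc (0:ℝ) M₁, r₁ s ∈ Icc a c₁ ∧ u₁ (r₁ s) = s)
    (hr₁inv : ∀ r ∈ Icc a c₁, r₁ (u₁ r) = r)
    (hr₂mem : ∀ s ∈ Icc (0:ℝ) M₂, r₂ s ∈ Icc a c₂ ∧ u₂ (r₂ s) = s)
    (hr₂inv : ∀ r ∈ Icc a c₂, r₂ (u₂ r) = r)
    :
    (r₁ β) ^ (n - 1) * u₁' (r₁ β) < (r₂ β) ^ (n - 1) * u₂' (r₂ β) ∧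
    (0 < β → ∀ s ∈ Ioc (0:ℝ) β, r₂ s < r₁ s) := by
  obtain ⟨hf, -⟩ := hf1
  subst hM₁ hM₂
  have hr₁0 := h₁.inverse_zero hc₁ hr₁mem
  have hr₂0 := h₂.inverse_zero hc₂ hr₂mem
  rcases hf2 with ⟨rfl, -⟩ | hf2
  · rw [hr₁0, hr₂0]
    exact ⟨mul_lt_mul_of_pos_left hslope₁₂ (pow_pos ha _), fun h => (lt_irrefl 0 h).elim⟩
  have ⟨_, hB, hBβ, _, _, _, hFβ⟩ := hf2
  have hβ : 0 < β := hB.trans hBβ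
  have hb₁ := h₁.isLevelBranch ha hc₁ hc₁up hr₁mem hr₁inv hβM₁
  have hb₂ := h₂.isLevelBranch ha hc₂ hc₂up hr₂mem hr₂inv hβM₂
  have hr0 : r₁ 0 = r₂ 0 := hr₁0.trans hr₂0.symm
  have hp0 : u₁' (r₁ 0) < u₂' (r₂ 0) := by rwa [hr₁0, hr₂0]
  have hF : ∀ s ∈ Ioo 0 β, Fint f s ≤ 0 := fun s hs => Fint_nonpos hf hf2 s (Ioo_subset_Icc_self hs)
  have hE : ∀ s ∈ Ioc 0 β, 0 < u₂' (r₂ s) ^ 2 / 2 + Fint f s := fun s hs =>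
    (Fint_pos hf hf2 hβM₂).trans_le
      (h₂.Fint_le_energy (by omega) ha.le hf hc₂ hr₂mem ⟨hs.1, hs.2.trans hβM₂.le⟩)
  have hp := hb₁.slope_lt hn hf hb₂ hr0 hp0 hF hE
  have hp' : ∀ s ∈ Ioo 0 β, u₁' (r₁ s) < u₂' (r₂ s) := fun s hs => hp s (Ioo_subset_Icc_self hs)
  refine ⟨?_, fun _ => hb₁.radius_lt hb₂ hr0 hp'⟩
  -- `F(β) = 0`, so the weighted energy at `β` is `(r^{n-1} u'(r))² / 2`
  have hH := hb₁.weightedEnergy_lt hn hf hb₂ hβ.le hr0 hp0 hF hp'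
  simp only [weightedEnergy, hFβ, add_zero] at hH
  have hr₁ := hb₁.r_pos β ⟨hβ.le, le_rfl⟩
  have hp₁ := hb₁.p_pos β ⟨hβ.le, le_rfl⟩
  have hr₂ := hb₂.r_pos β ⟨hβ.le, le_rfl⟩
  have hp₂ := hb₂.p_pos β ⟨hβ.le, le_rfl⟩
  exact (pow_lt_pow_iff_left₀ (by positivity) (by positivity) two_ne_zero).1 (by linarith)

/-- Step one (Proposition 3.1): `r₁(β)^{n-1} u₁'(r₁(β)) < r₂(β)^{n-1} u₂'(r₂(β))`,
and if `β > 0` then `r₁ > r₂` on `(0, β]`. -/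
theorem step_one
    (n : ℕ) (hn : 2 ≤ n) (f : ℝ → ℝ) (β B : ℝ)
    (hf1 : CondF1 f) (hf2 : CondF2 f β B)
    (a b : ℝ) (ha : 0 < a) (hab : a < b)
    (u₁ u₁' u₂ u₂' : ℝ → ℝ)
    (h₁ : IsPosSolAnn n a b f u₁ u₁') (h₂ : IsPosSolAnn n a b f u₂ u₂')
    (hslope₁ : 0 < u₁' a) (hslope₁₂ : u₁' a < u₂' a)
    (c₁ c₂ : ℝ) (hc₁ : c₁ ∈ Ioo a b) (hc₂ : c₂ ∈ Ioo a b)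
    (hc₁up : ∀ r ∈ Ico a c₁, 0 < u₁' r) (hc₁down : ∀ r ∈ Ioo c₁ b, u₁' r < 0)
    (hc₂up : ∀ r ∈ Ico a c₂, 0 < u₂' r) (hc₂down : ∀ r ∈ Ioo c₂ b, u₂' r < 0)
    (M₁ M₂ : ℝ) (hM₁ : M₁ = u₁ c₁) (hM₂ : M₂ = u₂ c₂)
    (hβM₁ : β < M₁) (hβM₂ : β < M₂)
    (r₁ r₂ : ℝ → ℝ)
    (hr₁mem : ∀ s ∈ Icc (0:ℝ) M₁, r₁ s ∈ Icc a c₁ ∧ u₁ (r₁ s) = s)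
    (hr₁inv : ∀ r ∈ Icc a c₁, r₁ (u₁ r) = r)
    (hr₂mem : ∀ s ∈ Icc (0:ℝ) M₂, r₂ s ∈ Icc a c₂ ∧ u₂ (r₂ s) = s)
    (hr₂inv : ∀ r ∈ Icc a c₂, r₂ (u₂ r) = r)
    :
    (r₁ β) ^ (n - 1) * u₁' (r₁ β) < (r₂ β) ^ (n - 1) * u₂' (r₂ β) ∧
    (0 < β → ∀ s ∈ Ioc (0:ℝ) β, r₂ s < r₁ s) :=
  step_one_general n hn f β B hf1 hf2 a b ha u₁ u₁' u₂ u₂' h₁ h₂ hslope₁₂ c₁ c₂ hc₁ hc₂ hc₁up hc₂up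
    M₁ M₂ hM₁ hM₂ hβM₁ hβM₂ r₁ r₂ hr₁mem hr₁inv hr₂mem hr₂inv
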